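/- arXiv:0906.5369 — 3 statements merged into one kernel-verified Lean document; each statement's English description precedes it below -/
import Mathlib

section
/- At every y ∈ Ω and for every index i, the composed function p satisfies ∂p/∂yⁱ = p₋₁·m_i. -/
open Real

noncomputable section
section helpers
variable {E : Type*} [NormedAddCommGroup E] [NormedSpace ℝ E]

lemma euler_hom (F : E → ℝ) (x : E) (c : ℝ) (hd : DifferentiableAt ℝ F x)
    (hh : ∀ᶠ lam in nhds (1:ℝ), F (lam • x) = lam * c) :
    fderiv ℝ F x x = c := by
  have hsm : HasDerivAt (fun lam : ℝ => lam • x) x 1 := by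
    simpa using (hasDerivAt_id (1:ℝ)).smul_const x
  have h1 : HasDerivAt (fun lam : ℝ => F (lam • x)) (fderiv ℝ F x x) 1 := by
    have hd' : HasFDerivAt F (fderiv ℝ F x) ((1:ℝ) • x) := by
      simpa using hd.hasFDerivAt
    simpa [Function.comp_def] using hd'.comp_hasDerivAt 1 hsm
  have h2 : HasDerivAt (fun lam : ℝ => F (lam • x)) c 1 := by
    have hb : HasDerivAt (fun lam : ℝ => lam * c) c 1 := by
      simpa using (hasDerivAt_id (1:ℝ)).mul_const c
    exact hb.congr_of_eventuallyEq hh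
  exact h1.unique h2

lemma euler_hom0 (F : E → ℝ) (x : E) (hd : DifferentiableAt ℝ F x)
    (hh : ∀ᶠ lam in nhds (1:ℝ), F (lam • x) = F x) :
    fderiv ℝ F x x = 0 := by
  have hsm : HasDerivAt (fun lam : ℝ => lam • x) x 1 := by
    simpa using (hasDerivAt_id (1:ℝ)).smul_const x
  have h1 : HasDerivAt (fun lam : ℝ => F (lam • x)) (fderiv ℝ F x x) 1 := by
    have hd' : HasFDerivAt F (fderiv ℝ F x) ((1:ℝ) • x) := by
      simpa using hd.hasFDerivAt
    simpa [Function.comp_def] using hd'.comp_hasDerivAt 1 hsm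
  have h2 : HasDerivAt (fun lam : ℝ => F (lam • x)) 0 1 :=
    (hasDerivAt_const (1:ℝ) (F x)).congr_of_eventuallyEq hh
  exact h1.unique h2

lemma scale_fderiv (F : E → ℝ) (lam c : ℝ) {x : E}
    (hd2 : DifferentiableAt ℝ F (lam • x))
    (hd1 : DifferentiableAt ℝ F x)
    (hh : ∀ᶠ z in nhds x, F (lam • z) = c * F z) (v : E) :
    lam * fderiv ℝ F (lam • x) v = c * fderiv ℝ F x v := by
  have h1 : HasFDerivAt (fun z => F (lam • z))
      ((fderiv ℝ F (lam • x)).comp (lam • ContinuousLinearMap.id ℝ E)) x := by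
    have := hd2.hasFDerivAt.comp x ((lam • ContinuousLinearMap.id ℝ E).hasFDerivAt (x := x))
    simpa [Function.comp_def] using this
  have h2 : HasFDerivAt (fun z => F (lam • z)) (c • fderiv ℝ F x) x :=
    (hd1.hasFDerivAt.const_mul c).congr_of_eventuallyEq hh
  have := congrArg (fun (T : E →L[ℝ] ℝ) => T v) (h1.unique h2)
  simpa [mul_comm] using this

lemma clm_decomp (T : ℝ × ℝ →L[ℝ] ℝ) (v : ℝ × ℝ) :
    T v = v.1 * T (1, 0) + v.2 * T (0, 1) := by
  have hv : v = v.1 • ((1:ℝ), (0:ℝ)) + v.2 • ((0:ℝ), (1:ℝ)) := by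
    ext <;> simp
  rw [hv, map_add, map_smul, map_smul]
  simp

lemma clm_decomp_pi {n : ℕ} (T : (Fin n → ℝ) →L[ℝ] ℝ) (v : Fin n → ℝ) :
    T v = ∑ j, v j * T (Pi.single j 1) := by
  have hv : v = ∑ j, v j • (Pi.single j 1 : Fin n → ℝ) := by
    funext k
    simp [Pi.single_apply, Finset.sum_apply]
  conv_lhs => rw [hv]
  rw [map_sum]
  simp

end helpers


/-- Partial derivative of `f : ℝ × ℝ → ℝ` with respect to its first argument. -/
def pds (f : ℝ × ℝ → ℝ) (x : ℝ × ℝ) : ℝ := fderiv ℝ f x (1, 0)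

/-- Partial derivative of `f : ℝ × ℝ → ℝ` with respect to its second argument. -/
def pdt (f : ℝ × ℝ → ℝ) (x : ℝ × ℝ) : ℝ := fderiv ℝ f x (0, 1)

/-- Partial derivative with respect to the i-th coordinate `yⁱ`. -/
def pdi {n : ℕ} (F : (Fin n → ℝ) → ℝ) (i : Fin n) (y : Fin n → ℝ) : ℝ :=
  fderiv ℝ F y (Pi.single i 1)

/-- Finsler metric tensor g_{ij} = (1/2)·∂²(L²)/∂yⁱ∂yʲ. -/
def gmet {n : ℕ} (L : (Fin n → ℝ) → ℝ) (y : Fin n → ℝ) (i j : Fin n) : ℝ :=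
  (1 / 2) * pdi (pdi (fun w => (L w) ^ 2) i) j y

/-- Normalized supporting element l_i = ∂L/∂yⁱ. -/
def lvec {n : ℕ} (L : (Fin n → ℝ) → ℝ) (y : Fin n → ℝ) (i : Fin n) : ℝ := pdi L i y

/-- y_i = g_{ij}·yʲ. -/
def ylow {n : ℕ} (L : (Fin n → ℝ) → ℝ) (y : Fin n → ℝ) (i : Fin n) : ℝ :=
  ∑ j, gmet L y i j * y j

/-- Angular metric tensor h_{ij} = g_{ij} − l_i·l_j. -/
def hmet {n : ℕ} (L : (Fin n → ℝ) → ℝ) (y : Fin n → ℝ) (i j : Fin n) : ℝ :=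
  gmet L y i j - lvec L y i * lvec L y j

/-- Cartan tensor C_{ijk} = (1/4)·∂³(L²)/∂yⁱ∂yʲ∂yᵏ. -/
def cartan {n : ℕ} (L : (Fin n → ℝ) → ℝ) (y : Fin n → ℝ) (i j k : Fin n) : ℝ :=
  (1 / 4) * pdi (pdi (pdi (fun w => (L w) ^ 2) i) j) k y

/-- β(y) = b_i·yⁱ. -/
def betaf {n : ℕ} (b : Fin n → ℝ) (y : Fin n → ℝ) : ℝ := ∑ i, b i * y i

/-- m_i = b_i − (β/L²)·y_i. -/
def mvec {n : ℕ} (L : (Fin n → ℝ) → ℝ) (b : Fin n → ℝ) (y : Fin n → ℝ) (i : Fin n) : ℝ :=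
  b i - (betaf b y / (L y) ^ 2) * ylow L y i

/-- The evaluation point (e^σ·L(y), β(y)). -/
def basept {n : ℕ} (L : (Fin n → ℝ) → ℝ) (b : Fin n → ℝ) (σ : ℝ) (y : Fin n → ℝ) : ℝ × ℝ :=
  (Real.exp σ * L y, betaf b y)

/-- q = f·f₂ evaluated at (e^σ·L(y), β(y)). -/
def qfun {n : ℕ} (f : ℝ × ℝ → ℝ) (L : (Fin n → ℝ) → ℝ) (b : Fin n → ℝ) (σ : ℝ)
    (y : Fin n → ℝ) : ℝ :=
  f (basept L b σ y) * pdt f (basept L b σ y)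

/-- p = f·f₁/L evaluated at (e^σ·L(y), β(y)). -/
def pfun {n : ℕ} (f : ℝ × ℝ → ℝ) (L : (Fin n → ℝ) → ℝ) (b : Fin n → ℝ) (σ : ℝ)
    (y : Fin n → ℝ) : ℝ :=
  f (basept L b σ y) * pds f (basept L b σ y) / L y

/-- q₀ = f·f₂₂ evaluated at (e^σ·L(y), β(y)). -/
def q0fun {n : ℕ} (f : ℝ × ℝ → ℝ) (L : (Fin n → ℝ) → ℝ) (b : Fin n → ℝ) (σ : ℝ)
    (y : Fin n → ℝ) : ℝ :=
  f (basept L b σ y) * pdt (pdt f) (basept L b σ y)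

/-- p₀ = f₂² + q₀ evaluated at (e^σ·L(y), β(y)). -/
def p0fun {n : ℕ} (f : ℝ × ℝ → ℝ) (L : (Fin n → ℝ) → ℝ) (b : Fin n → ℝ) (σ : ℝ)
    (y : Fin n → ℝ) : ℝ :=
  (pdt f (basept L b σ y)) ^ 2 + q0fun f L b σ y

/-- q₋₁ = f·f₁₂/L evaluated at (e^σ·L(y), β(y)). -/
def qm1fun {n : ℕ} (f : ℝ × ℝ → ℝ) (L : (Fin n → ℝ) → ℝ) (b : Fin n → ℝ) (σ : ℝ)
    (y : Fin n → ℝ) : ℝ :=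
  f (basept L b σ y) * pdt (pds f) (basept L b σ y) / L y

/-- p₋₁ = q₋₁ + p·f₂/f evaluated at (e^σ·L(y), β(y)). -/
def pm1fun {n : ℕ} (f : ℝ × ℝ → ℝ) (L : (Fin n → ℝ) → ℝ) (b : Fin n → ℝ) (σ : ℝ)
    (y : Fin n → ℝ) : ℝ :=
  qm1fun f L b σ y + pfun f L b σ y * pdt f (basept L b σ y) / f (basept L b σ y)

/-- q₋₂ = f·(e^σ·f₁₁ − f₁/L)/L² evaluated at (e^σ·L(y), β(y)). -/
def qm2fun {n : ℕ} (f : ℝ × ℝ → ℝ) (L : (Fin n → ℝ) → ℝ) (b : Fin n → ℝ) (σ : ℝ)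
    (y : Fin n → ℝ) : ℝ :=
  f (basept L b σ y) *
    (Real.exp σ * pds (pds f) (basept L b σ y) - pds f (basept L b σ y) / L y) / (L y) ^ 2

/-- p₋₂ = q₋₂ + e^σ·p²/f² evaluated at (e^σ·L(y), β(y)). -/
def pm2fun {n : ℕ} (f : ℝ × ℝ → ℝ) (L : (Fin n → ℝ) → ℝ) (b : Fin n → ℝ) (σ : ℝ)
    (y : Fin n → ℝ) : ℝ :=
  qm2fun f L b σ y + Real.exp σ * (pfun f L b σ y) ^ 2 / (f (basept L b σ y)) ^ 2

/-- p₀₂ = ∂(f₂² + f·f₂₂)/∂t evaluated at (e^σ·L(y), β(y)). -/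
def p02fun {n : ℕ} (f : ℝ × ℝ → ℝ) (L : (Fin n → ℝ) → ℝ) (b : Fin n → ℝ) (σ : ℝ)
    (y : Fin n → ℝ) : ℝ :=
  pdt (fun x => (pdt f x) ^ 2 + f x * pdt (pdt f) x) (basept L b σ y)

/-- The transformed Finsler function L̄(y) = f(e^σ·L(y), β(y)). -/
def Lbar {n : ℕ} (f : ℝ × ℝ → ℝ) (L : (Fin n → ℝ) → ℝ) (b : Fin n → ℝ) (σ : ℝ)
    (y : Fin n → ℝ) : ℝ :=
  f (basept L b σ y)

/-- bⁱ = g^{ij}·b_j. -/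
def bup {n : ℕ} (ginv : (Fin n → ℝ) → Fin n → Fin n → ℝ) (b : Fin n → ℝ)
    (y : Fin n → ℝ) (i : Fin n) : ℝ :=
  ∑ j, ginv y i j * b j

/-- b² = g^{ij}·b_i·b_j. -/
def bsq {n : ℕ} (ginv : (Fin n → ℝ) → Fin n → Fin n → ℝ) (b : Fin n → ℝ)
    (y : Fin n → ℝ) : ℝ :=
  ∑ i, ∑ j, ginv y i j * b i * b j

/-- m² = g^{ij}·m_i·m_j. -/
def msq {n : ℕ} (L : (Fin n → ℝ) → ℝ) (ginv : (Fin n → ℝ) → Fin n → Fin n → ℝ)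
    (b : Fin n → ℝ) (y : Fin n → ℝ) : ℝ :=
  ∑ i, ∑ j, ginv y i j * mvec L b y i * mvec L b y j

/-- mⁱ = g^{ij}·m_j. -/
def mup {n : ℕ} (L : (Fin n → ℝ) → ℝ) (ginv : (Fin n → ℝ) → Fin n → Fin n → ℝ)
    (b : Fin n → ℝ) (y : Fin n → ℝ) (i : Fin n) : ℝ :=
  ∑ j, ginv y i j * mvec L b y j

/-- hⁱ_j = g^{ir}·h_{rj}. -/
def hup {n : ℕ} (L : (Fin n → ℝ) → ℝ) (ginv : (Fin n → ℝ) → Fin n → Fin n → ℝ)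
    (y : Fin n → ℝ) (i j : Fin n) : ℝ :=
  ∑ r, ginv y i r * hmet L y r j

/-- ε = f²·(e^σ·p + m²·q₀)/L². -/
def epsfun {n : ℕ} (f : ℝ × ℝ → ℝ) (L : (Fin n → ℝ) → ℝ)
    (ginv : (Fin n → ℝ) → Fin n → Fin n → ℝ) (b : Fin n → ℝ) (σ : ℝ) (y : Fin n → ℝ) : ℝ :=
  (f (basept L b σ y)) ^ 2 *
    (Real.exp σ * pfun f L b σ y + msq L ginv b y * q0fun f L b σ y) / (L y) ^ 2

/-- s₀ = e^{−σ}·f²·q₀/(ε·p·L²). -/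
def s0fun {n : ℕ} (f : ℝ × ℝ → ℝ) (L : (Fin n → ℝ) → ℝ)
    (ginv : (Fin n → ℝ) → Fin n → Fin n → ℝ) (b : Fin n → ℝ) (σ : ℝ) (y : Fin n → ℝ) : ℝ :=
  Real.exp (-σ) * (f (basept L b σ y)) ^ 2 * q0fun f L b σ y /
    (epsfun f L ginv b σ y * pfun f L b σ y * (L y) ^ 2)

/-- s₋₁ = p₋₁·f²/(ε·p·L²). -/
def sm1fun {n : ℕ} (f : ℝ × ℝ → ℝ) (L : (Fin n → ℝ) → ℝ)
    (ginv : (Fin n → ℝ) → Fin n → Fin n → ℝ) (b : Fin n → ℝ) (σ : ℝ) (y : Fin n → ℝ) : ℝ :=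
  pm1fun f L b σ y * (f (basept L b σ y)) ^ 2 /
    (epsfun f L ginv b σ y * pfun f L b σ y * (L y) ^ 2)

/-- s₋₂ = p₋₁·(e^σ·m²·p·L² − b²·f²)/(ε·p·β·L²). -/
def sm2fun {n : ℕ} (f : ℝ × ℝ → ℝ) (L : (Fin n → ℝ) → ℝ)
    (ginv : (Fin n → ℝ) → Fin n → Fin n → ℝ) (b : Fin n → ℝ) (σ : ℝ) (y : Fin n → ℝ) : ℝ :=
  pm1fun f L b σ y *
    (Real.exp σ * msq L ginv b y * pfun f L b σ y * (L y) ^ 2 -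
      bsq ginv b y * (f (basept L b σ y)) ^ 2) /
    (epsfun f L ginv b σ y * pfun f L b σ y * betaf b y * (L y) ^ 2)

/-- ḡ^{ij} = (e^{−σ}/p)·g^{ij} − s₀·bⁱ·bʲ − s₋₁·(yⁱ·bʲ + yʲ·bⁱ) − s₋₂·yⁱ·yʲ. -/
def gbarinv {n : ℕ} (f : ℝ × ℝ → ℝ) (L : (Fin n → ℝ) → ℝ)
    (ginv : (Fin n → ℝ) → Fin n → Fin n → ℝ) (b : Fin n → ℝ) (σ : ℝ) (y : Fin n → ℝ)
    (i j : Fin n) : ℝ :=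
  (Real.exp (-σ) / pfun f L b σ y) * ginv y i j
    - s0fun f L ginv b σ y * bup ginv b y i * bup ginv b y j
    - sm1fun f L ginv b σ y * (y i * bup ginv b y j + y j * bup ginv b y i)
    - sm2fun f L ginv b σ y * y i * y j

theorem stmt_8
    (n : ℕ) (Ω : Set (Fin n → ℝ)) (hΩopen : IsOpen Ω)
    (hΩ0 : ∀ y ∈ Ω, y ≠ 0)
    (hΩcone : ∀ lam : ℝ, 0 < lam → ∀ y ∈ Ω, lam • y ∈ Ω)
    (L : (Fin n → ℝ) → ℝ)
    (hLsmooth : ContDiffOn ℝ (⊤ : ℕ∞) L Ω)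
    (hLpos : ∀ y ∈ Ω, 0 < L y)
    (hLhom : ∀ lam : ℝ, 0 < lam → ∀ y ∈ Ω, L (lam • y) = lam * L y)
    (ginv : (Fin n → ℝ) → Fin n → Fin n → ℝ)
    (hginv : ∀ y ∈ Ω, ∀ i j : Fin n,
      ∑ r, ginv y i r * gmet L y r j = if i = j then (1 : ℝ) else 0)
    (hginv' : ∀ y ∈ Ω, ∀ i j : Fin n,
      ∑ r, gmet L y i r * ginv y r j = if i = j then (1 : ℝ) else 0)
    (b : Fin n → ℝ) (σ : ℝ)
    (f : ℝ × ℝ → ℝ)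
    (hf : ContDiffOn ℝ (⊤ : ℕ∞) f {x : ℝ × ℝ | 0 < x.1})
    (hfpos : ∀ x : ℝ × ℝ, 0 < x.1 → 0 < f x)
    (hfhom : ∀ lam : ℝ, 0 < lam → ∀ x : ℝ × ℝ, 0 < x.1 →
      f (lam * x.1, lam * x.2) = lam * f x)
    :
    ∀ y ∈ Ω, ∀ i : Fin n,
      pdi (pfun f L b σ) i y = pm1fun f L b σ y * mvec L b y i := by
  intro y hy i
  classical
  set U : Set (ℝ × ℝ) := {x : ℝ × ℝ | 0 < x.1} with hUdef
  have hU : IsOpen U := isOpen_lt continuous_const continuous_fst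
  set x : ℝ × ℝ := basept L b σ y with hxdef
  have hLy : 0 < L y := hLpos y hy
  have hLne : L y ≠ 0 := ne_of_gt hLy
  have hx1 : x ∈ U := by
    simp only [hUdef, Set.mem_setOf_eq, hxdef, basept]
    positivity
  have hLd : DifferentiableAt ℝ L y :=
    (hLsmooth.differentiableOn (by simp)).differentiableAt (hΩopen.mem_nhds hy)
  set dL : (Fin n → ℝ) →L[ℝ] ℝ := fderiv ℝ L y with hdLdef
  set e : Fin n → ℝ := Pi.single i 1 with hedef
  have hfdiff : ∀ u ∈ U, DifferentiableAt ℝ f u := fun u hu =>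
    (hf.differentiableOn (by simp)).differentiableAt (hU.mem_nhds hu)
  have hf1 : ContDiffOn ℝ (⊤ : ℕ∞) (fderiv ℝ f) U := hf.fderiv_of_isOpen hU (by simp)
  have hpdscd : ContDiffOn ℝ (⊤ : ℕ∞) (pds f) U := by
    have := hf1.clm_apply (contDiffOn_const (c := ((1:ℝ), (0:ℝ))))
    exact this
  have hpdsdiff : ∀ u ∈ U, DifferentiableAt ℝ (pds f) u := fun u hu =>
    (hpdscd.differentiableOn (by simp)).differentiableAt (hU.mem_nhds hu)
  set B : (Fin n → ℝ) →L[ℝ] ℝ :=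
    ∑ j, b j • (ContinuousLinearMap.proj (R := ℝ) (φ := fun _ : Fin n => ℝ) j) with hBdef
  have hBapp : ∀ v, B v = betaf b v := by
    intro v
    simp [hBdef, betaf, ContinuousLinearMap.sum_apply]
  have hBfun : betaf b = ⇑B := funext fun v => (hBapp v).symm
  set D : (Fin n → ℝ) →L[ℝ] (ℝ × ℝ) := ((Real.exp σ • dL).prod B) with hDdef
  have hP : HasFDerivAt (basept L b σ) D y := by
    have h1 : HasFDerivAt (fun w => Real.exp σ * L w) (Real.exp σ • dL) y :=
      hLd.hasFDerivAt.const_mul _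
    have h2 : HasFDerivAt (betaf b) B y := by
      rw [hBfun]; exact B.hasFDerivAt
    exact h1.prodMk h2
  have hDe : D e = (Real.exp σ * dL e, b i) := by
    have hBe : B e = b i := by
      rw [hBapp]
      simp [betaf, hedef, Pi.single_apply]
    simp [hDdef, hBe, smul_eq_mul]
  have hfP : HasFDerivAt (fun w => f (basept L b σ w)) ((fderiv ℝ f x).comp D) y :=
    (hfdiff x hx1).hasFDerivAt.comp y hP
  have hpdsP : HasFDerivAt (fun w => pds f (basept L b σ w))
      ((fderiv ℝ (pds f) x).comp D) y :=
    HasFDerivAt.comp (g := pds f) y (hpdsdiff x hx1).hasFDerivAt hP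
  have hmul : HasFDerivAt (fun w => f (basept L b σ w) * pds f (basept L b σ w))
      (f x • ((fderiv ℝ (pds f) x).comp D) + pds f x • ((fderiv ℝ f x).comp D)) y :=
    hfP.mul hpdsP
  have hinv : HasFDerivAt (fun w => (L w)⁻¹) ((-((L y) ^ 2)⁻¹) • dL) y :=
    (hasDerivAt_inv hLne).comp_hasFDerivAt y hLd.hasFDerivAt
  have hdiv : HasFDerivAt (pfun f L b σ)
      ((f x * pds f x) • ((-((L y) ^ 2)⁻¹) • dL) +
        (L y)⁻¹ • (f x • ((fderiv ℝ (pds f) x).comp D) + pds f x • ((fderiv ℝ f x).comp D))) y := by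
    have := hmul.mul hinv
    have heq : pfun f L b σ = fun w =>
        f (basept L b σ w) * pds f (basept L b σ w) * (L w)⁻¹ := by
      funext w
      simp [pfun, div_eq_mul_inv]
    rw [heq]
    exact this
  have hpdival : pdi (pfun f L b σ) i y =
      (f x * (fderiv ℝ (pds f) x (D e)) + pds f x * (fderiv ℝ f x (D e))) / L y
        - f x * pds f x * dL e / (L y) ^ 2 := by
    have h := hdiv.fderiv
    simp only [pdi]
    rw [← hedef, h]
    simp only [ContinuousLinearMap.add_apply, ContinuousLinearMap.smul_apply,
      ContinuousLinearMap.comp_apply, smul_eq_mul]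
    field_simp
    ring
  -- the point x has coordinates (e^σ L y, β y)
  have hx1' : (0:ℝ) < x.1 := hx1
  have hxfst : x.1 = Real.exp σ * L y := rfl
  have hxsnd : x.2 = betaf b y := rfl
  -- Euler identity for f (degree 1)
  have hE1 : Real.exp σ * L y * pds f x + betaf b y * pdt f x = f x := by
    have hfxx : fderiv ℝ f x x = f x := by
      apply euler_hom f x (f x) (hfdiff x hx1)
      filter_upwards [eventually_gt_nhds (zero_lt_one (α := ℝ))] with lam hlam
      have hsm : lam • x = (lam * x.1, lam * x.2) := rfl
      rw [hsm]
      exact hfhom lam hlam x hx1'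
    have hd := clm_decomp (fderiv ℝ f x) x
    rw [hfxx] at hd
    rw [← hxfst, ← hxsnd]
    exact hd.symm
  -- scaling invariance of pds f
  have hscale : ∀ lam : ℝ, 0 < lam → pds f (lam • x) = pds f x := by
    intro lam hlam
    have hmem : lam • x ∈ U := by
      have : (lam • x).1 = lam * x.1 := rfl
      simp only [hUdef, Set.mem_setOf_eq, this]
      positivity
    have hh : ∀ᶠ z in nhds x, f (lam • z) = lam * f z := by
      filter_upwards [hU.eventually_mem hx1] with z hz
      have hsm : lam • z = (lam * z.1, lam * z.2) := rfl
      rw [hsm]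
      exact hfhom lam hlam z hz
    have h := scale_fderiv f lam lam (hfdiff _ hmem) (hfdiff x hx1) hh ((1:ℝ), (0:ℝ))
    exact mul_left_cancel₀ (ne_of_gt hlam) h
  -- Euler identity for pds f (degree 0)
  have hE2 : Real.exp σ * L y * pds (pds f) x + betaf b y * pdt (pds f) x = 0 := by
    have h0 : fderiv ℝ (pds f) x x = 0 := by
      apply euler_hom0 (pds f) x (hpdsdiff x hx1)
      filter_upwards [eventually_gt_nhds (zero_lt_one (α := ℝ))] with lam hlam
      exact hscale lam hlam
    have hd := clm_decomp (fderiv ℝ (pds f) x) x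
    rw [h0] at hd
    rw [← hxfst, ← hxsnd]
    exact hd.symm
  -- Euler identity for L : ylow = L * lvec
  have hE3 : ylow L y i = L y * lvec L y i := by
    set Q : (Fin n → ℝ) → ℝ := fun w => L w ^ 2 with hQdef
    have hQcd : ContDiffOn ℝ (⊤ : ℕ∞) Q Ω := hLsmooth.pow 2
    have hQ1 : ContDiffOn ℝ (⊤ : ℕ∞) (fderiv ℝ Q) Ω := hQcd.fderiv_of_isOpen hΩopen (by simp)
    have hQdiff : ∀ w ∈ Ω, DifferentiableAt ℝ Q w := fun w hw =>
      (hQcd.differentiableOn (by simp)).differentiableAt (hΩopen.mem_nhds hw)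
    set G : (Fin n → ℝ) → ℝ := fun w => fderiv ℝ Q w e with hGdef
    have hGdiff : ∀ w ∈ Ω, DifferentiableAt ℝ G w := by
      intro w hw
      have := (hQ1.clm_apply (contDiffOn_const (c := e)))
      exact (this.differentiableOn (by simp)).differentiableAt (hΩopen.mem_nhds hw)
    have hGscale : ∀ lam : ℝ, 0 < lam → ∀ w ∈ Ω, G (lam • w) = lam * G w := by
      intro lam hlam w hw
      have hh : ∀ᶠ z in nhds w, Q (lam • z) = lam ^ 2 * Q z := by
        filter_upwards [hΩopen.eventually_mem hw] with z hz
        simp only [hQdef]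
        rw [hLhom lam hlam z hz]
        ring
      have h := scale_fderiv Q lam (lam ^ 2) (hQdiff _ (hΩcone lam hlam w hw)) (hQdiff w hw) hh e
      have := mul_left_cancel₀ (ne_of_gt hlam) (by rw [h]; ring_nf :
        lam * fderiv ℝ Q (lam • w) e = lam * (lam * fderiv ℝ Q w e))
      simpa [hGdef] using this
    have hGE : fderiv ℝ G y y = G y := by
      apply euler_hom G y (G y) (hGdiff y hy)
      filter_upwards [eventually_gt_nhds (zero_lt_one (α := ℝ))] with lam hlam
      exact hGscale lam hlam y hy
    have hQy : fderiv ℝ Q y = ((2:ℝ) * L y) • dL := by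
      have h : HasFDerivAt Q ((((2:ℕ):ℝ) * L y ^ (2-1)) • dL) y :=
        (hasDerivAt_pow 2 (L y)).comp_hasFDerivAt y hLd.hasFDerivAt
      rw [h.fderiv]
      norm_num
    have hGy : G y = 2 * L y * dL e := by
      have h0 : G y = fderiv ℝ Q y e := rfl
      rw [h0, hQy]
      simp [smul_eq_mul, mul_assoc]
    have hsum : ylow L y i = (1/2) * fderiv ℝ G y y := by
      rw [clm_decomp_pi (fderiv ℝ G y) y]
      rw [ylow, Finset.mul_sum]
      apply Finset.sum_congr rfl
      intro j _
      have hgm : gmet L y i j = (1/2) * fderiv ℝ G y (Pi.single j 1) := rfl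
      rw [hgm]
      ring
    rw [hsum, hGE, hGy]
    have hlv : lvec L y i = dL e := rfl
    rw [hlv]
    ring
  -- put everything together
  rw [hpdival, hDe]
  have hmv : mvec L b y i = b i - betaf b y / L y ^ 2 * ylow L y i := rfl
  have hpm1 : pm1fun f L b σ y =
      f x * pdt (pds f) x / L y + (f x * pds f x / L y) * pdt f x / f x := rfl
  rw [hpm1, hmv, hE3]
  have hlv : lvec L y i = dL e := rfl
  rw [hlv]
  have hfd1 : fderiv ℝ f x ((Real.exp σ * dL e, b i)) =
      Real.exp σ * dL e * pds f x + b i * pdt f x := clm_decomp _ _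
  have hfd2 : fderiv ℝ (pds f) x ((Real.exp σ * dL e, b i)) =
      Real.exp σ * dL e * pds (pds f) x + b i * pdt (pds f) x := clm_decomp _ _
  rw [hfd1, hfd2]
  have hAne : f x ≠ 0 := ne_of_gt (hfpos x hx1')
  linear_combination (norm := skip) (dL e / L y ^ 2) * (f x * hE2 + pds f x * hE1)
  field_simp
  ring
end
end

section
/- Under the generalized β-conformal change L̄(y) = f(e^σ·L(y), β(y)), the transformed angular metric tensor satisfies, at every y ∈ Ω and for all indices i, j: h̄_{ij} = e^σ·p·h_{ij} + q₀·m_i·m_j. -/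
open Real

noncomputable section

section Helpers
variable {E : Type*} [NormedAddCommGroup E] [NormedSpace ℝ E]
variable {F : Type*} [NormedAddCommGroup F] [NormedSpace ℝ F]
variable {U : Set E} {H : E → ℝ} {y : E}

lemma diffAt_of_cd {H : E → F} (hU : IsOpen U) (hH : ContDiffOn ℝ (⊤ : ℕ∞) H U) (hy : y ∈ U) :
    DifferentiableAt ℝ H y :=
  (hH.differentiableOn (by simp)).differentiableAt (hU.mem_nhds hy)

lemma cd_fderiv (hU : IsOpen U) (hH : ContDiffOn ℝ (⊤ : ℕ∞) H U) :
    ContDiffOn ℝ (⊤ : ℕ∞) (fderiv ℝ H) U :=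
  hH.fderiv_of_isOpen hU (by simp)

lemma hasFDerivAt_fderiv_apply (hU : IsOpen U) (hH : ContDiffOn ℝ (⊤ : ℕ∞) H U) (hy : y ∈ U) (v : E) :
    HasFDerivAt (fun w => fderiv ℝ H w v)
      ((ContinuousLinearMap.apply ℝ ℝ v).comp (fderiv ℝ (fderiv ℝ H) y)) y := by
  have h1 : HasFDerivAt (fderiv ℝ H) (fderiv ℝ (fderiv ℝ H) y) y :=
    (diffAt_of_cd hU (cd_fderiv hU hH) hy).hasFDerivAt
  exact ((ContinuousLinearMap.apply ℝ ℝ v).hasFDerivAt).comp y h1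

lemma snd_apply (hU : IsOpen U) (hH : ContDiffOn ℝ (⊤ : ℕ∞) H U) (hy : y ∈ U) (v u : E) :
    fderiv ℝ (fun w => fderiv ℝ H w v) y u = fderiv ℝ (fderiv ℝ H) y u v := by
  rw [(hasFDerivAt_fderiv_apply hU hH hy v).fderiv]; rfl

lemma snd_symm (hU : IsOpen U) (hH : ContDiffOn ℝ (⊤ : ℕ∞) H U) (hy : y ∈ U) (v w : E) :
    fderiv ℝ (fderiv ℝ H) y v w = fderiv ℝ (fderiv ℝ H) y w v :=
  ((hH y hy).contDiffAt (hU.mem_nhds hy)).isSymmSndFDerivAt (by rw [minSmoothness_of_isRCLikeNormedField]; exact WithTop.coe_le_coe.mpr le_top) v w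

lemma euler_core {G : E → ℝ} (hdiff : DifferentiableAt ℝ G y) (d : ℕ)
    (h : ∀ᶠ lam in nhds (1 : ℝ), G (lam • y) = lam ^ d * G y) :
    fderiv ℝ G y y = d * G y := by
  have h1 : HasDerivAt (fun lam : ℝ => G (lam • y)) (fderiv ℝ G y y) 1 := by
    have hc : HasDerivAt (fun lam : ℝ => lam • y) y 1 := by
      simpa using (hasDerivAt_id (1:ℝ)).smul_const y
    have hG : HasFDerivAt G (fderiv ℝ G y) ((1:ℝ) • y) := by
      rw [one_smul]; exact hdiff.hasFDerivAt
    exact hG.comp_hasDerivAt 1 hc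
  have h2 : HasDerivAt (fun lam : ℝ => lam ^ d * G y) (d * G y) 1 := by
    simpa using (hasDerivAt_pow d (1:ℝ)).mul_const (G y)
  have hE : (fun lam : ℝ => lam ^ d * G y) =ᶠ[nhds (1:ℝ)] (fun lam : ℝ => G (lam • y)) :=
    h.mono fun lam hl => hl.symm
  have h3 : HasDerivAt (fun lam : ℝ => lam ^ d * G y) (fderiv ℝ G y y) 1 :=
    h1.congr_of_eventuallyEq hE
  exact h3.unique h2

lemma fderiv_cone_hom (hU : IsOpen U)
    (hcone : ∀ lam : ℝ, 0 < lam → ∀ w ∈ U, lam • w ∈ U)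
    (hH : ContDiffOn ℝ (⊤ : ℕ∞) H U) (d : ℕ)
    (hhom : ∀ lam : ℝ, 0 < lam → ∀ w ∈ U, H (lam • w) = lam ^ d * H w)
    (hy : y ∈ U) {lam : ℝ} (hlam : 0 < lam) (v : E) :
    lam * fderiv ℝ H (lam • y) v = lam ^ d * fderiv ℝ H y v := by
  have hmem : lam • y ∈ U := hcone lam hlam y hy
  have hK : HasFDerivAt (fun w => H (lam • w))
      ((fderiv ℝ H (lam • y)).comp (lam • ContinuousLinearMap.id ℝ E)) y := by
    have hs : HasFDerivAt (fun w : E => lam • w) (lam • ContinuousLinearMap.id ℝ E) y := by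
      exact (lam • ContinuousLinearMap.id ℝ E).hasFDerivAt
    exact (diffAt_of_cd hU hH hmem).hasFDerivAt.comp y hs
  have heq : (fun w => H (lam • w)) =ᶠ[nhds y] fun w => lam ^ d * H w := by
    filter_upwards [hU.mem_nhds hy] with w hw using hhom lam hlam w hw
  have h2 : fderiv ℝ (fun w => H (lam • w)) y = fderiv ℝ (fun w => lam ^ d * H w) y :=
    heq.fderiv_eq
  have h3 : fderiv ℝ (fun w => lam ^ d * H w) y = lam ^ d • fderiv ℝ H y := by
    rw [fderiv_const_mul (diffAt_of_cd hU hH hy)]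
  have := congrArg (fun T : E →L[ℝ] ℝ => T v) (hK.fderiv.symm.trans (h2.trans h3))
  simpa [mul_comm] using this

lemma snd_euler (hU : IsOpen U)
    (hcone : ∀ lam : ℝ, 0 < lam → ∀ w ∈ U, lam • w ∈ U)
    (hH : ContDiffOn ℝ (⊤ : ℕ∞) H U) (d : ℕ) (hd : 1 ≤ d)
    (hhom : ∀ lam : ℝ, 0 < lam → ∀ w ∈ U, H (lam • w) = lam ^ d * H w)
    (hy : y ∈ U) (v : E) :
    fderiv ℝ (fderiv ℝ H) y y v = ((d : ℝ) - 1) * fderiv ℝ H y v := by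
  have hG : DifferentiableAt ℝ (fun w => fderiv ℝ H w v) y :=
    (hasFDerivAt_fderiv_apply hU hH hy v).differentiableAt
  have hev : ∀ᶠ lam in nhds (1 : ℝ), fderiv ℝ H (lam • y) v = lam ^ (d - 1) * fderiv ℝ H y v := by
    filter_upwards [eventually_gt_nhds (by norm_num : (0:ℝ) < 1)] with lam hlam
    have := fderiv_cone_hom hU hcone hH d hhom hy hlam v
    have hpow : lam ^ d = lam * lam ^ (d - 1) := by
      conv_lhs => rw [show d = 1 + (d - 1) from (Nat.add_sub_cancel' hd).symm]
      rw [pow_add, pow_one]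
    rw [hpow] at this
    apply mul_left_cancel₀ hlam.ne'
    rw [this]; ring
  have := euler_core hG (d - 1) hev
  rw [snd_apply hU hH hy v y] at this
  rw [this]
  congr 1
  have : ((d : ℝ)) = (d - 1 : ℕ) + 1 := by
    rw [Nat.cast_sub hd]; ring
  rw [this]; ring

end Helpers

section Geo

lemma clm_prod_apply (T : ℝ × ℝ →L[ℝ] ℝ) (a c : ℝ) :
    T (a, c) = a * T (1, 0) + c * T (0, 1) := by
  have h : (a, c) = a • ((1:ℝ), (0:ℝ)) + c • ((0:ℝ), (1:ℝ)) := by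
    simp [Prod.ext_iff]
  rw [h, map_add, map_smul, map_smul, smul_eq_mul, smul_eq_mul]

lemma clm_prod_apply2 (T : ℝ × ℝ →L[ℝ] (ℝ × ℝ →L[ℝ] ℝ)) (a c : ℝ) (v : ℝ × ℝ) :
    T (a, c) v = a * T (1, 0) v + c * T (0, 1) v := by
  have h : (a, c) = a • ((1:ℝ), (0:ℝ)) + c • ((0:ℝ), (1:ℝ)) := by
    simp [Prod.ext_iff]
  rw [h, map_add, map_smul, map_smul]
  simp

variable {n : ℕ} {Ω : Set (Fin n → ℝ)} {L : (Fin n → ℝ) → ℝ} {y : Fin n → ℝ}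

lemma fderiv_sq (hΩ : IsOpen Ω) (hL : ContDiffOn ℝ (⊤ : ℕ∞) L Ω) (hy : y ∈ Ω) :
    fderiv ℝ (fun w => L w ^ 2) y = (2 * L y) • fderiv ℝ L y := by
  have hd := (diffAt_of_cd hΩ hL hy).hasFDerivAt
  have h2 : HasFDerivAt (fun z => L z ^ 2) (L y • fderiv ℝ L y + L y • fderiv ℝ L y) y := by
    have e : (fun z => L z ^ 2) = (fun z => L z * L z) := by funext z; ring
    rw [e]; exact hd.mul hd
  rw [h2.fderiv]
  ext v
  simp [two_mul]; ring

lemma hmet_eq (hΩ : IsOpen Ω) (hL : ContDiffOn ℝ (⊤ : ℕ∞) L Ω) (hy : y ∈ Ω) (i j : Fin n) :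
    hmet L y i j
      = L y * fderiv ℝ (fderiv ℝ L) y (Pi.single j 1) (Pi.single i 1) := by
  have hev : (pdi (fun w => L w ^ 2) i) =ᶠ[nhds y]
      (fun w => (2 * L w) * fderiv ℝ L w (Pi.single i 1)) := by
    filter_upwards [hΩ.mem_nhds hy] with w hw
    show fderiv ℝ (fun w => L w ^ 2) w (Pi.single i 1) = _
    rw [fderiv_sq hΩ hL hw]
    simp [mul_assoc]
  have hmul : HasFDerivAt (fun w => (2 * L w) * fderiv ℝ L w (Pi.single i 1))
      ((2 * L y) • ((ContinuousLinearMap.apply ℝ ℝ (Pi.single i 1)).comp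
          (fderiv ℝ (fderiv ℝ L) y))
        + (fderiv ℝ L y (Pi.single i 1)) • ((2:ℝ) • fderiv ℝ L y)) y :=
    ((diffAt_of_cd hΩ hL hy).hasFDerivAt.const_mul 2).mul
      (hasFDerivAt_fderiv_apply hΩ hL hy (Pi.single i 1))
  have hg : gmet L y i j = (1/2) * ((2 * L y) * fderiv ℝ (fderiv ℝ L) y (Pi.single j 1) (Pi.single i 1)
      + fderiv ℝ L y (Pi.single i 1) * (2 * fderiv ℝ L y (Pi.single j 1))) := by
    show (1/2) * fderiv ℝ (pdi (fun w => L w ^ 2) i) y (Pi.single j 1) = _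
    rw [hev.fderiv_eq, hmul.fderiv]
    simp [mul_assoc]
  show gmet L y i j - lvec L y i * lvec L y j = _
  rw [hg]
  show _ - fderiv ℝ L y (Pi.single i 1) * fderiv ℝ L y (Pi.single j 1) = _
  ring

lemma ylow_eq (hΩ : IsOpen Ω)
    (hcone : ∀ lam : ℝ, 0 < lam → ∀ w ∈ Ω, lam • w ∈ Ω)
    (hL : ContDiffOn ℝ (⊤ : ℕ∞) L Ω)
    (hhom : ∀ lam : ℝ, 0 < lam → ∀ w ∈ Ω, L (lam • w) = lam * L w)
    (hy : y ∈ Ω) (i : Fin n) :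
    ylow L y i = L y * fderiv ℝ L y (Pi.single i 1) := by
  have hsq : ContDiffOn ℝ (⊤ : ℕ∞) (fun w => L w ^ 2) Ω := hL.pow 2
  have hsqhom : ∀ lam : ℝ, 0 < lam → ∀ w ∈ Ω, (fun w => L w ^ 2) (lam • w) = lam ^ 2 * L w ^ 2 := by
    intro lam hlam w hw
    simp only [hhom lam hlam w hw]; ring
  set T := fderiv ℝ (fderiv ℝ (fun w => L w ^ 2)) y with hT
  have hg : ∀ k : Fin n, gmet L y i k = (1/2) * T (Pi.single k 1) (Pi.single i 1) := by
    intro k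
    show (1/2) * fderiv ℝ (pdi (fun w => L w ^ 2) i) y (Pi.single k 1) = _
    rw [show pdi (fun w => L w ^ 2) i = fun w => fderiv ℝ (fun w => L w ^ 2) w (Pi.single i 1) from rfl,
      snd_apply hΩ hsq hy]
  have hsum : ∑ k, (y k • (Pi.single k (1:ℝ) : Fin n → ℝ)) = y := by
    have : ∀ k, y k • (Pi.single k (1:ℝ) : Fin n → ℝ) = Pi.single k (y k) := by
      intro k; rw [← Pi.single_smul]; simp
    simp only [this, Finset.univ_sum_single]
  have hmain : ∑ k, T (Pi.single k 1) (Pi.single i 1) * y k = T y (Pi.single i 1) := by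
    calc ∑ k, T (Pi.single k 1) (Pi.single i 1) * y k
        = ∑ k, T (y k • (Pi.single k (1:ℝ) : Fin n → ℝ)) (Pi.single i 1) := by
          refine Finset.sum_congr rfl fun k _ => ?_
          rw [map_smul]; simp [mul_comm]
      _ = T (∑ k, y k • (Pi.single k (1:ℝ) : Fin n → ℝ)) (Pi.single i 1) := by
          rw [map_sum]; simp
      _ = T y (Pi.single i 1) := by rw [hsum]
  have heuler : T y (Pi.single i 1) = ((2:ℝ) - 1) * fderiv ℝ (fun w => L w ^ 2) y (Pi.single i 1) := by
    have := snd_euler hΩ hcone hsq 2 (by norm_num) hsqhom hy (Pi.single i 1)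
    simpa using this
  have : ylow L y i = (1/2) * T y (Pi.single i 1) := by
    show ∑ k, gmet L y i k * y k = _
    simp only [hg]
    rw [← hmain, Finset.mul_sum]
    exact Finset.sum_congr rfl fun k _ => by ring
  rw [this, heuler, fderiv_sq hΩ hL hy]
  simp; ring

end Geo


set_option maxHeartbeats 1600000

theorem stmt_13
    (n : ℕ) (Ω : Set (Fin n → ℝ)) (hΩopen : IsOpen Ω)
    (hΩ0 : ∀ y ∈ Ω, y ≠ 0)
    (hΩcone : ∀ lam : ℝ, 0 < lam → ∀ y ∈ Ω, lam • y ∈ Ω)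
    (L : (Fin n → ℝ) → ℝ)
    (hLsmooth : ContDiffOn ℝ (⊤ : ℕ∞) L Ω)
    (hLpos : ∀ y ∈ Ω, 0 < L y)
    (hLhom : ∀ lam : ℝ, 0 < lam → ∀ y ∈ Ω, L (lam • y) = lam * L y)
    (ginv : (Fin n → ℝ) → Fin n → Fin n → ℝ)
    (hginv : ∀ y ∈ Ω, ∀ i j : Fin n,
      ∑ r, ginv y i r * gmet L y r j = if i = j then (1 : ℝ) else 0)
    (hginv' : ∀ y ∈ Ω, ∀ i j : Fin n,
      ∑ r, gmet L y i r * ginv y r j = if i = j then (1 : ℝ) else 0)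
    (b : Fin n → ℝ) (σ : ℝ)
    (f : ℝ × ℝ → ℝ)
    (hf : ContDiffOn ℝ (⊤ : ℕ∞) f {x : ℝ × ℝ | 0 < x.1})
    (hfpos : ∀ x : ℝ × ℝ, 0 < x.1 → 0 < f x)
    (hfhom : ∀ lam : ℝ, 0 < lam → ∀ x : ℝ × ℝ, 0 < x.1 →
      f (lam * x.1, lam * x.2) = lam * f x)
    :
    ∀ y ∈ Ω, ∀ i j : Fin n,
      hmet (Lbar f L b σ) y i j
        = Real.exp σ * pfun f L b σ y * hmet L y i j
          + q0fun f L b σ y * mvec L b y i * mvec L b y j := by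
  intro y hy i j
  have hupos : 0 < Real.exp σ := Real.exp_pos σ
  have hA : 0 < L y := hLpos y hy
  have hAne : L y ≠ 0 := hA.ne'
  -- the half-plane
  have hUfopen : IsOpen {x : ℝ × ℝ | 0 < x.1} := isOpen_lt continuous_const continuous_fst
  have hUfcone : ∀ lam : ℝ, 0 < lam → ∀ x ∈ {x : ℝ × ℝ | 0 < x.1}, lam • x ∈ {x : ℝ × ℝ | 0 < x.1} := by
    intro lam hl x hx
    show 0 < (lam • x).1
    rw [Prod.smul_fst, smul_eq_mul]
    exact mul_pos hl hx
  have hfhom' : ∀ lam : ℝ, 0 < lam → ∀ x ∈ {x : ℝ × ℝ | 0 < x.1}, f (lam • x) = lam ^ 1 * f x := by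
    intro lam hl x hx
    rw [pow_one]
    exact hfhom lam hl x hx
  -- the linear form B with coefficients b
  set B : (Fin n → ℝ) →L[ℝ] ℝ := ∑ k, b k • ContinuousLinearMap.proj k with hB
  have hBapp : ∀ v, B v = ∑ k, b k * v k := by
    intro v
    simp [hB, ContinuousLinearMap.sum_apply]
  have hbeta : betaf b = ⇑B := by
    funext w
    rw [hBapp]
    rfl
  have hBsingle : ∀ k : Fin n, B (Pi.single k 1) = b k := by
    intro k
    rw [hBapp]
    simp [Pi.single_apply]
  -- base point
  have hxU : basept L b σ y ∈ {x : ℝ × ℝ | 0 < x.1} := by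
    show 0 < Real.exp σ * L y
    exact mul_pos hupos hA
  -- derivative of the base-point map
  have hPhid : ∀ w ∈ Ω, HasFDerivAt (basept L b σ)
      ((Real.exp σ • fderiv ℝ L w).prod B) w := by
    intro w hw
    have h1 : HasFDerivAt (fun w => Real.exp σ * L w) (Real.exp σ • fderiv ℝ L w) w :=
      (diffAt_of_cd hΩopen hLsmooth hw).hasFDerivAt.const_mul (Real.exp σ)
    have h2 : HasFDerivAt (betaf b) B w := by
      rw [hbeta]; exact B.hasFDerivAt
    exact h1.prodMk h2
  have hPhiC : ContDiffOn ℝ (⊤ : ℕ∞) (basept L b σ) Ω := by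
    apply ContDiffOn.prodMk
    · exact contDiffOn_const.mul hLsmooth
    · rw [hbeta]; exact B.contDiff.contDiffOn
  have hmaps : Set.MapsTo (basept L b σ) Ω {x : ℝ × ℝ | 0 < x.1} := by
    intro w hw
    show 0 < Real.exp σ * L w
    exact mul_pos hupos (hLpos w hw)
  have hLbarC : ContDiffOn ℝ (⊤ : ℕ∞) (Lbar f L b σ) Ω := hf.comp hPhiC hmaps
  -- first partial derivatives of Lbar on Ω
  have hpdiL : ∀ k : Fin n, ∀ w ∈ Ω, pdi (Lbar f L b σ) k w
      = Real.exp σ * fderiv ℝ L w (Pi.single k 1) * pds f (basept L b σ w)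
        + b k * pdt f (basept L b σ w) := by
    intro k w hw
    have hD : HasFDerivAt (Lbar f L b σ)
        ((fderiv ℝ f (basept L b σ w)).comp ((Real.exp σ • fderiv ℝ L w).prod B)) w :=
      ((diffAt_of_cd hUfopen hf (hmaps hw)).hasFDerivAt).comp w (hPhid w hw)
    show fderiv ℝ (Lbar f L b σ) w (Pi.single k 1) = _
    rw [hD.fderiv]
    have hDΦ : ((Real.exp σ • fderiv ℝ L w).prod B) (Pi.single k 1)
        = (Real.exp σ * fderiv ℝ L w (Pi.single k 1), b k) := by
      simp [ContinuousLinearMap.prod_apply, hBsingle]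
    rw [ContinuousLinearMap.comp_apply, hDΦ, clm_prod_apply]
    rfl
  -- second derivative pieces
  have hsndf : ∀ v : ℝ × ℝ, HasFDerivAt (fun z => fderiv ℝ f z v)
      ((ContinuousLinearMap.apply ℝ ℝ v).comp (fderiv ℝ (fderiv ℝ f) (basept L b σ y)))
      (basept L b σ y) := fun v => hasFDerivAt_fderiv_apply hUfopen hf hxU v
  have P1 : HasFDerivAt (fun w => fderiv ℝ L w (Pi.single i 1))
      ((ContinuousLinearMap.apply ℝ ℝ (Pi.single i 1)).comp (fderiv ℝ (fderiv ℝ L) y)) y :=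
    hasFDerivAt_fderiv_apply hΩopen hLsmooth hy (Pi.single i 1)
  have P2 : HasFDerivAt (fun w => pds f (basept L b σ w))
      (((ContinuousLinearMap.apply ℝ ℝ ((1:ℝ),(0:ℝ))).comp
          (fderiv ℝ (fderiv ℝ f) (basept L b σ y))).comp
        ((Real.exp σ • fderiv ℝ L y).prod B)) y :=
    (hsndf (1,0)).comp y (hPhid y hy)
  have P3 : HasFDerivAt (fun w => pdt f (basept L b σ w))
      (((ContinuousLinearMap.apply ℝ ℝ ((0:ℝ),(1:ℝ))).comp
          (fderiv ℝ (fderiv ℝ f) (basept L b σ y))).comp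
        ((Real.exp σ • fderiv ℝ L y).prod B)) y :=
    (hsndf (0,1)).comp y (hPhid y hy)
  have hGall : HasFDerivAt (fun w => Real.exp σ * fderiv ℝ L w (Pi.single i 1)
        * pds f (basept L b σ w) + b i * pdt f (basept L b σ w))
      (((Real.exp σ * fderiv ℝ L y (Pi.single i 1)) •
          ((((ContinuousLinearMap.apply ℝ ℝ ((1:ℝ),(0:ℝ))).comp
            (fderiv ℝ (fderiv ℝ f) (basept L b σ y))).comp
            ((Real.exp σ • fderiv ℝ L y).prod B)))
        + (pds f (basept L b σ y)) • (Real.exp σ •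
            ((ContinuousLinearMap.apply ℝ ℝ (Pi.single i 1)).comp (fderiv ℝ (fderiv ℝ L) y))))
        + (b i) • ((((ContinuousLinearMap.apply ℝ ℝ ((0:ℝ),(1:ℝ))).comp
            (fderiv ℝ (fderiv ℝ f) (basept L b σ y))).comp
            ((Real.exp σ • fderiv ℝ L y).prod B)))) y :=
    ((P1.const_mul (Real.exp σ)).mul P2).add (P3.const_mul (b i))
  have hGev : pdi (Lbar f L b σ) i =ᶠ[nhds y]
      (fun w => Real.exp σ * fderiv ℝ L w (Pi.single i 1) * pds f (basept L b σ w)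
        + b i * pdt f (basept L b σ w)) := by
    filter_upwards [hΩopen.mem_nhds hy] with w hw using hpdiL i w hw
  have hsndLbar : fderiv ℝ (fderiv ℝ (Lbar f L b σ)) y (Pi.single j 1) (Pi.single i 1)
      = Real.exp σ * fderiv ℝ L y (Pi.single i 1) *
          (Real.exp σ * fderiv ℝ L y (Pi.single j 1)
              * fderiv ℝ (fderiv ℝ f) (basept L b σ y) (1,0) (1,0)
            + b j * fderiv ℝ (fderiv ℝ f) (basept L b σ y) (0,1) (1,0))
        + pds f (basept L b σ y) *
            (Real.exp σ * fderiv ℝ (fderiv ℝ L) y (Pi.single j 1) (Pi.single i 1))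
        + b i * (Real.exp σ * fderiv ℝ L y (Pi.single j 1)
              * fderiv ℝ (fderiv ℝ f) (basept L b σ y) (1,0) (0,1)
            + b j * fderiv ℝ (fderiv ℝ f) (basept L b σ y) (0,1) (0,1)) := by
    rw [← snd_apply hΩopen hLbarC hy (Pi.single i 1) (Pi.single j 1)]
    rw [show (fun w => fderiv ℝ (Lbar f L b σ) w (Pi.single i 1))
        = pdi (Lbar f L b σ) i from rfl]
    rw [hGev.fderiv_eq, hGall.fderiv]
    simp only [ContinuousLinearMap.add_apply, ContinuousLinearMap.coe_smul',
      Pi.smul_apply, ContinuousLinearMap.comp_apply, ContinuousLinearMap.prod_apply,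
      ContinuousLinearMap.smul_apply, ContinuousLinearMap.apply_apply, hBsingle,
      smul_eq_mul]
    rw [clm_prod_apply2 (fderiv ℝ (fderiv ℝ f) (basept L b σ y))
        (Real.exp σ * fderiv ℝ L y (Pi.single j 1)) (b j) (1,0),
      clm_prod_apply2 (fderiv ℝ (fderiv ℝ f) (basept L b σ y))
        (Real.exp σ * fderiv ℝ L y (Pi.single j 1)) (b j) (0,1)]
  -- Euler relations for f at the base point
  have hEv : ∀ v : ℝ × ℝ,
      (Real.exp σ * L y) * fderiv ℝ (fderiv ℝ f) (basept L b σ y) (1,0) v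
        + betaf b y * fderiv ℝ (fderiv ℝ f) (basept L b σ y) (0,1) v = 0 := by
    intro v
    have h0 : fderiv ℝ (fderiv ℝ f) (basept L b σ y) (basept L b σ y) v = 0 := by
      have := snd_euler hUfopen hUfcone hf 1 le_rfl hfhom' hxU v
      simpa using this
    have h1 : fderiv ℝ (fderiv ℝ f) (basept L b σ y) (basept L b σ y) v
        = (Real.exp σ * L y) * fderiv ℝ (fderiv ℝ f) (basept L b σ y) (1,0) v
          + betaf b y * fderiv ℝ (fderiv ℝ f) (basept L b σ y) (0,1) v :=
      clm_prod_apply2 (fderiv ℝ (fderiv ℝ f) (basept L b σ y)) (Real.exp σ * L y) (betaf b y) v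
    rw [← h1, h0]
  have hsym : fderiv ℝ (fderiv ℝ f) (basept L b σ y) ((1:ℝ),(0:ℝ)) ((0:ℝ),(1:ℝ))
      = fderiv ℝ (fderiv ℝ f) (basept L b σ y) ((0:ℝ),(1:ℝ)) ((1:ℝ),(0:ℝ)) :=
    snd_symm hUfopen hf hxU (1,0) (0,1)
  -- q0 in terms of second derivatives
  have hq0 : pdt (pdt f) (basept L b σ y)
      = fderiv ℝ (fderiv ℝ f) (basept L b σ y) (0,1) (0,1) := by
    show fderiv ℝ (fun z => fderiv ℝ f z ((0:ℝ),(1:ℝ))) (basept L b σ y) (0,1) = _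
    rw [snd_apply hUfopen hf hxU]
  -- rewrite both sides
  rw [hmet_eq hΩopen hLbarC hy i j, hmet_eq hΩopen hLsmooth hy i j, hsndLbar]
  show f (basept L b σ y) * _ = _
  rw [pfun, q0fun, hq0, mvec, mvec, ylow_eq hΩopen hΩcone hLsmooth hLhom hy i,
    ylow_eq hΩopen hΩcone hLsmooth hLhom hy j]
  -- final algebra
  have hR1 := hEv (1,0)
  have hR2 := hEv (0,1)
  have hgoalsub : fderiv ℝ (fderiv ℝ f) (basept L b σ y) ((1:ℝ),(0:ℝ)) ((1:ℝ),(0:ℝ))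
      * (Real.exp σ * L y) * (Real.exp σ * L y)
      = betaf b y * betaf b y
        * fderiv ℝ (fderiv ℝ f) (basept L b σ y) ((0:ℝ),(1:ℝ)) ((0:ℝ),(1:ℝ)) := by
    linear_combination (Real.exp σ * L y) * hR1 - betaf b y * hR2
      + ((Real.exp σ * L y) * betaf b y) * hsym
  have hune : Real.exp σ ≠ 0 := hupos.ne'
  have hsne : Real.exp σ * L y ≠ 0 := (mul_pos hupos hA).ne'
  have hFmix' : fderiv ℝ (fderiv ℝ f) (basept L b σ y) ((1:ℝ),(0:ℝ)) ((0:ℝ),(1:ℝ))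
      = -(betaf b y * fderiv ℝ (fderiv ℝ f) (basept L b σ y) ((0:ℝ),(1:ℝ)) ((0:ℝ),(1:ℝ)))
        / (Real.exp σ * L y) := by
    rw [eq_div_iff hsne]
    linarith [hR2]
  have hFmix : fderiv ℝ (fderiv ℝ f) (basept L b σ y) ((0:ℝ),(1:ℝ)) ((1:ℝ),(0:ℝ))
      = -(betaf b y * fderiv ℝ (fderiv ℝ f) (basept L b σ y) ((0:ℝ),(1:ℝ)) ((0:ℝ),(1:ℝ)))
        / (Real.exp σ * L y) := by
    rw [← hsym]; exact hFmix'
  have hF11 : fderiv ℝ (fderiv ℝ f) (basept L b σ y) ((1:ℝ),(0:ℝ)) ((1:ℝ),(0:ℝ))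
      = betaf b y * betaf b y
          * fderiv ℝ (fderiv ℝ f) (basept L b σ y) ((0:ℝ),(1:ℝ)) ((0:ℝ),(1:ℝ))
        / ((Real.exp σ * L y) * (Real.exp σ * L y)) := by
    rw [eq_div_iff (mul_ne_zero hsne hsne)]
    linarith [hgoalsub]
  rw [hFmix, hFmix', hF11]
  field_simp
  ring
end
end

section
/- Under the generalized β-conformal change L̄(y) = f(e^σ·L(y), β(y)), the transformed metric tensor satisfies, at every y ∈ Ω and for all indices i, j: ḡ_{ij} = e^σ·p·g_{ij} + p₀·b_i·b_j + e^σ·p₋₁·(b_i·y_j + b_j·y_i) + e^σ·p₋₂·y_i·y_j. -/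
open Real

noncomputable section

lemma clm_pair (T : (ℝ × ℝ) →L[ℝ] ℝ) (a c : ℝ) : T (a, c) = a * T (1, 0) + c * T (0, 1) := by
  have h : (a, c) = a • ((1:ℝ), (0:ℝ)) + c • ((0:ℝ), (1:ℝ)) := by simp [Prod.ext_iff]
  rw [h, map_add, map_smul, map_smul]; simp

lemma pdi_congr {n : ℕ} {F G : (Fin n → ℝ) → ℝ} {y : Fin n → ℝ} (h : F =ᶠ[nhds y] G) (i : Fin n) :
    pdi F i y = pdi G i y := by unfold pdi; rw [h.fderiv_eq]

lemma pdi_add {n : ℕ} {F G : (Fin n → ℝ) → ℝ} {y : Fin n → ℝ}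
    (hF : DifferentiableAt ℝ F y) (hG : DifferentiableAt ℝ G y) (i : Fin n) :
    pdi (fun w => F w + G w) i y = pdi F i y + pdi G i y := by
  unfold pdi; rw [fderiv_fun_add hF hG]; simp

lemma pdi_mul {n : ℕ} {F G : (Fin n → ℝ) → ℝ} {y : Fin n → ℝ}
    (hF : DifferentiableAt ℝ F y) (hG : DifferentiableAt ℝ G y) (i : Fin n) :
    pdi (fun w => F w * G w) i y = pdi F i y * G y + F y * pdi G i y := by
  unfold pdi; rw [fderiv_fun_mul hF hG]; simp; ring

lemma pdi_const_mul {n : ℕ} {F : (Fin n → ℝ) → ℝ} {y : Fin n → ℝ}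
    (hF : DifferentiableAt ℝ F y) (c : ℝ) (i : Fin n) :
    pdi (fun w => c * F w) i y = c * pdi F i y := by
  unfold pdi; rw [fderiv_const_mul hF]; simp

lemma pdi_mul_const {n : ℕ} {F : (Fin n → ℝ) → ℝ} {y : Fin n → ℝ}
    (hF : DifferentiableAt ℝ F y) (c : ℝ) (i : Fin n) :
    pdi (fun w => F w * c) i y = pdi F i y * c := by
  unfold pdi; rw [fderiv_mul_const hF]; simp [mul_comm]

lemma pdi_sq {n : ℕ} {F : (Fin n → ℝ) → ℝ} {y : Fin n → ℝ}
    (hF : DifferentiableAt ℝ F y) (i : Fin n) :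
    pdi (fun w => F w ^ 2) i y = 2 * F y * pdi F i y := by
  have : (fun w => F w ^ 2) = fun w => F w * F w := by ext w; ring
  rw [this, pdi_mul hF hF]; ring

lemma basept_hasFDerivAt {n : ℕ} (L : (Fin n → ℝ) → ℝ) (b : Fin n → ℝ) (σ : ℝ)
    {y : Fin n → ℝ} (hL : DifferentiableAt ℝ L y) :
    HasFDerivAt (basept L b σ)
      ((Real.exp σ • fderiv ℝ L y).prod (∑ k, b k • ContinuousLinearMap.proj k)) y := by
  refine HasFDerivAt.prodMk ?_ ?_
  · exact hL.hasFDerivAt.const_mul _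
  · refine HasFDerivAt.fun_sum fun k _ => ?_
    have h := ((ContinuousLinearMap.proj (R := ℝ) (φ := fun _ : Fin n => ℝ) k).hasFDerivAt (x := y)).const_mul (b k)
    exact h

lemma basept_deriv_apply {n : ℕ} (L : (Fin n → ℝ) → ℝ) (b : Fin n → ℝ) (σ : ℝ)
    {y : Fin n → ℝ} (hL : DifferentiableAt ℝ L y) (i : Fin n) :
    ((Real.exp σ • fderiv ℝ L y).prod (∑ k, b k • ContinuousLinearMap.proj k))
      (Pi.single i 1) = (Real.exp σ * pdi L i y, b i) := by
  simp [ContinuousLinearMap.prod_apply, ContinuousLinearMap.sum_apply, pdi,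
    Pi.single_apply, mul_ite]

lemma pdi_comp {n : ℕ} (g : ℝ × ℝ → ℝ) (L : (Fin n → ℝ) → ℝ) (b : Fin n → ℝ) (σ : ℝ)
    {y : Fin n → ℝ} (hg : DifferentiableAt ℝ g (basept L b σ y))
    (hL : DifferentiableAt ℝ L y) (i : Fin n) :
    pdi (fun w => g (basept L b σ w)) i y
      = pds g (basept L b σ y) * (Real.exp σ * pdi L i y)
        + pdt g (basept L b σ y) * b i := by
  have hbp := basept_hasFDerivAt L b σ hL
  have hcomp := hg.hasFDerivAt.comp y hbp
  have : pdi (fun w => g (basept L b σ w)) i y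
      = fderiv ℝ g (basept L b σ y) (Real.exp σ * pdi L i y, b i) := by
    rw [pdi, show (fun w => g (basept L b σ w)) = g ∘ basept L b σ from rfl, hcomp.fderiv]
    simp only [ContinuousLinearMap.comp_apply]
    rw [basept_deriv_apply L b σ hL i]
  rw [this, clm_pair]
  unfold pds pdt; ring

-- differentiability of partial-derivative functions
lemma pds_contDiffAt {f : ℝ × ℝ → ℝ} {x : ℝ × ℝ} (hf : ContDiffAt ℝ (⊤ : ℕ∞) f x) :
    ContDiffAt ℝ (⊤ : ℕ∞) (pds f) x := by
  have h1 : ContDiffAt ℝ (⊤ : ℕ∞) (fderiv ℝ f) x := hf.fderiv_right (by simp)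
  exact h1.clm_apply contDiffAt_const

lemma pdt_contDiffAt {f : ℝ × ℝ → ℝ} {x : ℝ × ℝ} (hf : ContDiffAt ℝ (⊤ : ℕ∞) f x) :
    ContDiffAt ℝ (⊤ : ℕ∞) (pdt f) x := by
  have h1 : ContDiffAt ℝ (⊤ : ℕ∞) (fderiv ℝ f) x := hf.fderiv_right (by simp)
  exact h1.clm_apply contDiffAt_const

lemma pdiL_contDiffAt {n : ℕ} {L : (Fin n → ℝ) → ℝ} {y : Fin n → ℝ}
    (hL : ContDiffAt ℝ (⊤ : ℕ∞) L y) (i : Fin n) : ContDiffAt ℝ (⊤ : ℕ∞) (pdi L i) y := by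
  have h1 : ContDiffAt ℝ (⊤ : ℕ∞) (fderiv ℝ L) y := hL.fderiv_right (by simp)
  exact h1.clm_apply contDiffAt_const

-- Schwarz symmetry for f at a point where it is C^∞
lemma schwarz {f : ℝ × ℝ → ℝ} {x : ℝ × ℝ} (hf : ContDiffAt ℝ (⊤ : ℕ∞) f x) :
    pdt (pds f) x = pds (pdt f) x := by
  have hsymm : IsSymmSndFDerivAt ℝ f x := hf.isSymmSndFDerivAt (by
    rw [minSmoothness_of_isRCLikeNormedField]; exact WithTop.coe_le_coe.mpr le_top)
  have h1 : ContDiffAt ℝ (⊤ : ℕ∞) (fderiv ℝ f) x := hf.fderiv_right (by simp)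
  have hd : DifferentiableAt ℝ (fderiv ℝ f) x := h1.differentiableAt (by simp)
  have e1 : ∀ v w : ℝ × ℝ, fderiv ℝ (fun z => fderiv ℝ f z v) x w
      = fderiv ℝ (fderiv ℝ f) x w v := by
    intro v w
    have : (fun z => fderiv ℝ f z v)
        = ⇑(ContinuousLinearMap.apply ℝ ℝ v) ∘ fderiv ℝ f := rfl
    rw [this, fderiv_comp x ((ContinuousLinearMap.apply ℝ ℝ v).differentiableAt) hd]
    simp [ContinuousLinearMap.fderiv]
  unfold pdt pds
  rw [e1, e1, hsymm]

-- Euler's identity for positively 1-homogeneous (along the ray) functions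
lemma euler_ray {n : ℕ} {h : (Fin n → ℝ) → ℝ} {y : Fin n → ℝ}
    (hd : DifferentiableAt ℝ h y) (hhom : ∀ t : ℝ, 0 < t → h (t • y) = t * h y) :
    fderiv ℝ h y y = h y := by
  have hcurve : HasDerivAt (fun t : ℝ => t • y) y 1 := by
    simpa using (hasDerivAt_id (1 : ℝ)).smul_const y
  have hφ : HasDerivAt (fun t : ℝ => h (t • y)) (fderiv ℝ h y y) 1 := by
    have hd' : HasFDerivAt h (fderiv ℝ h y) ((1 : ℝ) • y) := by
      rw [one_smul]; exact hd.hasFDerivAt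
    exact hd'.comp_hasDerivAt 1 hcurve
  have hψ : HasDerivAt (fun t : ℝ => h (t • y)) (h y) 1 := by
    have h2 : HasDerivAt (fun t : ℝ => t * h y) (h y) 1 := by
      simpa using (hasDerivAt_id (1 : ℝ)).mul_const (h y)
    apply h2.congr_of_eventuallyEq
    filter_upwards [eventually_gt_nhds (zero_lt_one)] with t ht
    exact hhom t ht
  exact hφ.unique hψ

-- homogeneity of the gradient of L²
lemma grad_sq_hom {n : ℕ} {Ω : Set (Fin n → ℝ)} (hΩopen : IsOpen Ω)
    (hΩcone : ∀ lam : ℝ, 0 < lam → ∀ y ∈ Ω, lam • y ∈ Ω)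
    {L : (Fin n → ℝ) → ℝ} (hLsmooth : ContDiffOn ℝ (⊤ : ℕ∞) L Ω)
    (hLhom : ∀ lam : ℝ, 0 < lam → ∀ y ∈ Ω, L (lam • y) = lam * L y)
    (i : Fin n) {y : Fin n → ℝ} (hy : y ∈ Ω) {t : ℝ} (ht : 0 < t) :
    pdi (fun w => L w ^ 2) i (t • y) = t * pdi (fun w => L w ^ 2) i y := by
  have hty : t • y ∈ Ω := hΩcone t ht y hy
  have hLty : DifferentiableAt ℝ (fun w => L w ^ 2) (t • y) :=
    ((hLsmooth.contDiffAt (hΩopen.mem_nhds hty)).pow 2).differentiableAt (by simp)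
  have hLy : DifferentiableAt ℝ (fun w => L w ^ 2) y :=
    ((hLsmooth.contDiffAt (hΩopen.mem_nhds hy)).pow 2).differentiableAt (by simp)
  -- the two functions agreeing on Ω
  have heq : (fun w => L (t • w) ^ 2) =ᶠ[nhds y] (fun w => t ^ 2 * L w ^ 2) := by
    filter_upwards [hΩopen.mem_nhds hy] with w hw
    rw [hLhom t ht w hw]; ring
  have hscale : HasFDerivAt (fun w : Fin n → ℝ => t • w)
      (t • ContinuousLinearMap.id ℝ (Fin n → ℝ)) y := (hasFDerivAt_id y).const_smul t
  have hcomp : HasFDerivAt (fun w => L (t • w) ^ 2)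
      ((fderiv ℝ (fun w => L w ^ 2) (t • y)).comp (t • ContinuousLinearMap.id ℝ (Fin n → ℝ))) y :=
    hLty.hasFDerivAt.comp y hscale
  have h1 : fderiv ℝ (fun w => L (t • w) ^ 2) y (Pi.single i 1)
      = t * pdi (fun w => L w ^ 2) i (t • y) := by
    rw [hcomp.fderiv]
    simp [pdi, map_smul]
  have h2 : fderiv ℝ (fun w => L (t • w) ^ 2) y (Pi.single i 1)
      = t ^ 2 * pdi (fun w => L w ^ 2) i y := by
    rw [heq.fderiv_eq]
    exact pdi_const_mul hLy (t ^ 2) i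
  have h3 : t * pdi (fun w => L w ^ 2) i (t • y)
      = t * (t * pdi (fun w => L w ^ 2) i y) := by
    rw [← h1, h2]; ring
  exact mul_left_cancel₀ (ne_of_gt ht) h3



lemma pds_sq {f : ℝ × ℝ → ℝ} {x : ℝ × ℝ} (hf : DifferentiableAt ℝ f x) :
    pds (fun z => f z ^ 2) x = 2 * f x * pds f x := by
  have h : (fun z => f z ^ 2) = fun z => f z * f z := by ext z; ring
  unfold pds; rw [h, fderiv_fun_mul hf hf]; simp; ring

lemma pdt_sq {f : ℝ × ℝ → ℝ} {x : ℝ × ℝ} (hf : DifferentiableAt ℝ f x) :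
    pdt (fun z => f z ^ 2) x = 2 * f x * pdt f x := by
  have h : (fun z => f z ^ 2) = fun z => f z * f z := by ext z; ring
  unfold pdt; rw [h, fderiv_fun_mul hf hf]; simp; ring

theorem stmt_14
    (n : ℕ) (Ω : Set (Fin n → ℝ)) (hΩopen : IsOpen Ω)
    (hΩ0 : ∀ y ∈ Ω, y ≠ 0)
    (hΩcone : ∀ lam : ℝ, 0 < lam → ∀ y ∈ Ω, lam • y ∈ Ω)
    (L : (Fin n → ℝ) → ℝ)
    (hLsmooth : ContDiffOn ℝ (⊤ : ℕ∞) L Ω)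
    (hLpos : ∀ y ∈ Ω, 0 < L y)
    (hLhom : ∀ lam : ℝ, 0 < lam → ∀ y ∈ Ω, L (lam • y) = lam * L y)
    (ginv : (Fin n → ℝ) → Fin n → Fin n → ℝ)
    (hginv : ∀ y ∈ Ω, ∀ i j : Fin n,
      ∑ r, ginv y i r * gmet L y r j = if i = j then (1 : ℝ) else 0)
    (hginv' : ∀ y ∈ Ω, ∀ i j : Fin n,
      ∑ r, gmet L y i r * ginv y r j = if i = j then (1 : ℝ) else 0)
    (b : Fin n → ℝ) (σ : ℝ)
    (f : ℝ × ℝ → ℝ)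
    (hf : ContDiffOn ℝ (⊤ : ℕ∞) f {x : ℝ × ℝ | 0 < x.1})
    (hfpos : ∀ x : ℝ × ℝ, 0 < x.1 → 0 < f x)
    (hfhom : ∀ lam : ℝ, 0 < lam → ∀ x : ℝ × ℝ, 0 < x.1 →
      f (lam * x.1, lam * x.2) = lam * f x)
    :
    ∀ y ∈ Ω, ∀ i j : Fin n,
      gmet (Lbar f L b σ) y i j
        = Real.exp σ * pfun f L b σ y * gmet L y i j
          + p0fun f L b σ y * b i * b j
          + Real.exp σ * pm1fun f L b σ y * (b i * ylow L y j + b j * ylow L y i)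
          + Real.exp σ * pm2fun f L b σ y * ylow L y i * ylow L y j := by
  intro y hy i j
  have hΩnhds : Ω ∈ nhds y := hΩopen.mem_nhds hy
  have hLC : ContDiffAt ℝ (⊤ : ℕ∞) L y := hLsmooth.contDiffAt hΩnhds
  have hLd : DifferentiableAt ℝ L y := hLC.differentiableAt (by simp)
  have hLne : L y ≠ 0 := ne_of_gt (hLpos y hy)
  have hopen : IsOpen {x : ℝ × ℝ | 0 < x.1} := isOpen_lt continuous_const continuous_fst
  have hmem : ∀ w ∈ Ω, basept L b σ w ∈ {x : ℝ × ℝ | 0 < x.1} := fun w hw =>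
    mul_pos (Real.exp_pos σ) (hLpos w hw)
  have hfC : ContDiffAt ℝ (⊤ : ℕ∞) f (basept L b σ y) := hf.contDiffAt (hopen.mem_nhds (hmem y hy))
  have hfd : DifferentiableAt ℝ f (basept L b σ y) := hfC.differentiableAt (by simp)
  have hfne : f (basept L b σ y) ≠ 0 := ne_of_gt (hfpos _ (hmem y hy))
  have hpdsd : DifferentiableAt ℝ (pds f) (basept L b σ y) :=
    (pds_contDiffAt hfC).differentiableAt (by simp)
  have hpdtd : DifferentiableAt ℝ (pdt f) (basept L b σ y) :=
    (pdt_contDiffAt hfC).differentiableAt (by simp)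
  have hbpd : DifferentiableAt ℝ (basept L b σ) y :=
    (basept_hasFDerivAt L b σ hLd).differentiableAt
  have hfbp : DifferentiableAt ℝ (fun w => f (basept L b σ w)) y := hfd.comp y hbpd
  have hpdsbp : DifferentiableAt ℝ (fun w => pds f (basept L b σ w)) y := hpdsd.comp y hbpd
  have hpdtbp : DifferentiableAt ℝ (fun w => pdt f (basept L b σ w)) y := hpdtd.comp y hbpd
  have hLid : DifferentiableAt ℝ (pdi L i) y := (pdiL_contDiffAt hLC i).differentiableAt (by simp)
  -- Euler: y_k = L * l_k
  have hylow : ∀ k : Fin n, ylow L y k = L y * pdi L k y := by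
    intro k
    have hsqC : ContDiffAt ℝ (⊤ : ℕ∞) (fun w => L w ^ 2) y := hLC.pow 2
    have hhd : DifferentiableAt ℝ (pdi (fun w => L w ^ 2) k) y :=
      (pdiL_contDiffAt hsqC k).differentiableAt (by simp)
    have heuler : fderiv ℝ (pdi (fun w => L w ^ 2) k) y y = pdi (fun w => L w ^ 2) k y :=
      euler_ray hhd (fun t ht => grad_sq_hom hΩopen hΩcone hLsmooth hLhom k hy ht)
    have hsingle : ∀ r : Fin n, (Pi.single r (y r) : Fin n → ℝ)
        = y r • (Pi.single r (1 : ℝ) : Fin n → ℝ) := by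
      intro r; funext k'
      simp [Pi.single_apply, mul_ite]
    have hsum : fderiv ℝ (pdi (fun w => L w ^ 2) k) y y
        = ∑ r, y r * pdi (pdi (fun w => L w ^ 2) k) r y := by
      set T := fderiv ℝ (pdi (fun w => L w ^ 2) k) y with hT
      calc T y = T (∑ r, Pi.single r (y r)) := by
              congr 1
              exact (Finset.univ_sum_single y).symm
        _ = ∑ r, T (Pi.single r (y r)) := map_sum T _ _
        _ = ∑ r, y r * pdi (pdi (fun w => L w ^ 2) k) r y := by
              refine Finset.sum_congr rfl fun r _ => ?_
              rw [hsingle r, map_smul]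
              rfl
    have hsq : pdi (fun w => L w ^ 2) k y = 2 * L y * pdi L k y := pdi_sq hLd k
    have : ylow L y k = ∑ r, y r * ((1 / 2) * pdi (pdi (fun w => L w ^ 2) k) r y) := by
      unfold ylow gmet
      refine Finset.sum_congr rfl fun r _ => ?_
      ring
    rw [this]
    have : ∑ r, y r * ((1 / 2) * pdi (pdi (fun w => L w ^ 2) k) r y)
        = (1 / 2) * ∑ r, y r * pdi (pdi (fun w => L w ^ 2) k) r y := by
      rw [Finset.mul_sum]
      refine Finset.sum_congr rfl fun r _ => ?_
      ring
    rw [this, ← hsum, heuler, hsq]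
    ring
  -- gmet L in terms of l and second derivatives of L
  have hgmet : gmet L y i j = pdi L i y * pdi L j y + L y * pdi (pdi L i) j y := by
    have hEq : (pdi (fun w => L w ^ 2) i) =ᶠ[nhds y] fun w => 2 * L w * pdi L i w := by
      filter_upwards [hΩnhds] with w hw
      exact pdi_sq ((hLsmooth.contDiffAt (hΩopen.mem_nhds hw)).differentiableAt (by simp)) i
    have h1 : pdi (pdi (fun w => L w ^ 2) i) j y = pdi (fun w => 2 * L w * pdi L i w) j y :=
      pdi_congr hEq j
    have h2 : pdi (fun w => 2 * L w * pdi L i w) j y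
        = pdi (fun w => 2 * L w) j y * pdi L i y + (2 * L y) * pdi (pdi L i) j y :=
      pdi_mul (hLd.const_mul 2) hLid j
    have h3 : pdi (fun w => 2 * L w) j y = 2 * pdi L j y := pdi_const_mul hLd 2 j
    have : gmet L y i j = (1 / 2) * pdi (pdi (fun w => L w ^ 2) i) j y := rfl
    rw [this, h1, h2, h3]
    ring
  -- step A: first derivative of L̄² on Ω
  have hstepA : (pdi (fun w => Lbar f L b σ w ^ 2) i) =ᶠ[nhds y]
      fun w => 2 * (f (basept L b σ w) * pds f (basept L b σ w)) * (Real.exp σ * pdi L i w)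
        + 2 * (f (basept L b σ w) * pdt f (basept L b σ w)) * b i := by
    filter_upwards [hΩnhds] with w hw
    have hfdw : DifferentiableAt ℝ f (basept L b σ w) :=
      (hf.contDiffAt (hopen.mem_nhds (hmem w hw))).differentiableAt (by simp)
    have hLdw : DifferentiableAt ℝ L w :=
      (hLsmooth.contDiffAt (hΩopen.mem_nhds hw)).differentiableAt (by simp)
    have h1 : pdi (fun w' => (fun x => f x ^ 2) (basept L b σ w')) i w
        = pds (fun x => f x ^ 2) (basept L b σ w) * (Real.exp σ * pdi L i w)
          + pdt (fun x => f x ^ 2) (basept L b σ w) * b i :=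
      pdi_comp _ L b σ (hfdw.pow 2) hLdw i
    have h2 := pds_sq hfdw
    have h3 := pdt_sq hfdw
    show pdi (fun w' => Lbar f L b σ w' ^ 2) i w = _
    have hL : (fun w' => Lbar f L b σ w' ^ 2)
        = fun w' => (fun x => f x ^ 2) (basept L b σ w') := rfl
    rw [hL, h1, h2, h3]
    ring
  have hmain : pdi (pdi (fun w => Lbar f L b σ w ^ 2) i) j y
      = pdi (fun w => 2 * (f (basept L b σ w) * pds f (basept L b σ w))
            * (Real.exp σ * pdi L i w)
          + 2 * (f (basept L b σ w) * pdt f (basept L b σ w)) * b i) j y :=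
    pdi_congr hstepA j
  -- second derivative pieces
  have h8 : pdi (fun w => f (basept L b σ w)) j y
      = pds f (basept L b σ y) * (Real.exp σ * pdi L j y)
        + pdt f (basept L b σ y) * b j := pdi_comp f L b σ hfd hLd j
  have h9 : pdi (fun w => pds f (basept L b σ w)) j y
      = pds (pds f) (basept L b σ y) * (Real.exp σ * pdi L j y)
        + pdt (pds f) (basept L b σ y) * b j := pdi_comp (pds f) L b σ hpdsd hLd j
  have h10 : pdi (fun w => pdt f (basept L b σ w)) j y
      = pds (pdt f) (basept L b σ y) * (Real.exp σ * pdi L j y)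
        + pdt (pdt f) (basept L b σ y) * b j := pdi_comp (pdt f) L b σ hpdtd hLd j
  have h11 : pds (pdt f) (basept L b σ y) = pdt (pds f) (basept L b σ y) :=
    (schwarz hfC).symm
  have h4 : pdi (fun w => 2 * (f (basept L b σ w) * pds f (basept L b σ w))
            * (Real.exp σ * pdi L i w)
          + 2 * (f (basept L b σ w) * pdt f (basept L b σ w)) * b i) j y
      = pdi (fun w => 2 * (f (basept L b σ w) * pds f (basept L b σ w))
            * (Real.exp σ * pdi L i w)) j y
        + pdi (fun w => 2 * (f (basept L b σ w) * pdt f (basept L b σ w)) * b i) j y :=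
    pdi_add (((hfbp.mul hpdsbp).const_mul 2).mul (hLid.const_mul _))
      (((hfbp.mul hpdtbp).const_mul 2).mul_const _) j
  have h5 : pdi (fun w => 2 * (f (basept L b σ w) * pds f (basept L b σ w))
            * (Real.exp σ * pdi L i w)) j y
      = pdi (fun w => 2 * (f (basept L b σ w) * pds f (basept L b σ w))) j y
          * (Real.exp σ * pdi L i y)
        + (2 * (f (basept L b σ y) * pds f (basept L b σ y)))
          * pdi (fun w => Real.exp σ * pdi L i w) j y :=
    pdi_mul ((hfbp.mul hpdsbp).const_mul 2) (hLid.const_mul _) j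
  have h6 : pdi (fun w => Real.exp σ * pdi L i w) j y
      = Real.exp σ * pdi (pdi L i) j y := pdi_const_mul hLid _ j
  have h7 : pdi (fun w => 2 * (f (basept L b σ w) * pds f (basept L b σ w))) j y
      = 2 * (pdi (fun w => f (basept L b σ w)) j y * pds f (basept L b σ y)
          + f (basept L b σ y) * pdi (fun w => pds f (basept L b σ w)) j y) := by
    rw [pdi_const_mul (hfbp.fun_mul hpdsbp) 2 j, pdi_mul hfbp hpdsbp j]
  have h12 : pdi (fun w => 2 * (f (basept L b σ w) * pdt f (basept L b σ w)) * b i) j y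
      = pdi (fun w => 2 * (f (basept L b σ w) * pdt f (basept L b σ w))) j y * b i :=
    pdi_mul_const ((hfbp.mul hpdtbp).const_mul 2) _ j
  have h13 : pdi (fun w => 2 * (f (basept L b σ w) * pdt f (basept L b σ w))) j y
      = 2 * (pdi (fun w => f (basept L b σ w)) j y * pdt f (basept L b σ y)
          + f (basept L b σ y) * pdi (fun w => pdt f (basept L b σ w)) j y) := by
    rw [pdi_const_mul (hfbp.fun_mul hpdtbp) 2 j, pdi_mul hfbp hpdtbp j]
  have hLHS : gmet (Lbar f L b σ) y i j
      = (1 / 2) * pdi (pdi (fun w => Lbar f L b σ w ^ 2) i) j y := rfl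
  rw [hLHS, hmain, h4, h5, h6, h7, h12, h13, h8, h9, h10, h11, hgmet, hylow i, hylow j]
  simp only [pfun, p0fun, q0fun, pm1fun, qm1fun, pm2fun, qm2fun]
  field_simp
  ring
end
end
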